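/- Fix d ≥ 1 and let F(x_1,…,x_d) = ∑ a_d(n_1,…,n_d) x_1^{n_1}⋯x_d^{n_d} be the multivariate formal power series over ℤ whose coefficients are the numbers of d-dimensional rook walks. Then ( ∏_{i=1}^d (1-x_i) − ∑_{i=1}^d x_i ∏_{j≠i} (1-x_j) ) · F = ∏_{i=1}^d (1-x_i) as formal power series; equivalently, F = 1/(1 − ∑_{i=1}^d x_i/(1-x_i)). -/

import Mathlib

/-!
Cutting a nonempty rook walk after its first step `(i, k)` leaves a walk to `v - k eᵢ`, so
`a(0) = 1` and `a(v) = ∑ᵢ ∑_{1 ≤ k ≤ vᵢ} a(v - k eᵢ)` otherwise; that is,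
`F = 1 + ∑ᵢ xᵢ/(1 - xᵢ) · F`. Multiplying by `∏ⱼ (1 - xⱼ)` clears the denominators, using
`(1 - xᵢ) · (xᵢ/(1 - xᵢ) · F) = xᵢ · F`.
-/

/-- The set of `d`-dimensional rook walks from the origin to `v`: a walk is a
finite sequence of steps, each step adding a positive integer amount to
exactly one coordinate (a step is recorded as a pair of the chosen coordinate
and the positive amount added). -/
def RookWalks (d : ℕ) (v : Fin d → ℕ) : Set (List (Fin d × ℕ)) :=
  {L | (∀ s ∈ L, 0 < s.2) ∧
       ∀ i : Fin d, (L.map (fun s => if s.1 = i then s.2 else 0)).sum = v i}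

/-- The number of `d`-dimensional rook walks from the origin to `v`. -/
noncomputable def rookWalkCount (d : ℕ) (v : Fin d → ℕ) : ℕ :=
  (RookWalks d v).ncard

open MvPowerSeries Finset

section

variable {d : ℕ}

theorem cons_mem_rookWalks {v : Fin d → ℕ} {i : Fin d} {k : ℕ} {M : List (Fin d × ℕ)} :
    (i, k + 1) :: M ∈ RookWalks d v ↔ k < v i ∧ M ∈ RookWalks d (v - Pi.single i (k + 1)) := by
  simp only [RookWalks, Set.mem_ofPred_eq, List.forall_mem_cons, List.map_cons, List.sum_cons,
    Pi.sub_apply, Pi.single_apply, add_pos_iff, zero_lt_one, or_true, true_and]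
  constructor
  · rintro ⟨hpos, hsum⟩
    refine ⟨by have := hsum i; rw [if_pos rfl] at this; omega, hpos, fun j => ?_⟩
    have := hsum j
    split_ifs at this ⊢ <;> subst_vars <;> omega
  · rintro ⟨hk, hpos, hsum⟩
    refine ⟨hpos, fun j => ?_⟩
    have := hsum j
    split_ifs at this ⊢ <;> subst_vars <;> omega

theorem nil_mem_rookWalks {v : Fin d → ℕ} : [] ∈ RookWalks d v ↔ v = 0 := by
  simp [RookWalks, funext_iff, eq_comm]

theorem cons_zero_notMem_rookWalks {v : Fin d → ℕ} {i : Fin d} {M : List (Fin d × ℕ)} :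
    (i, 0) :: M ∉ RookWalks d v :=
  fun h => (h.1 _ List.mem_cons_self).false

theorem rookWalks_zero : RookWalks d 0 = {[]} := by
  ext (_ | ⟨⟨i, _ | k⟩, M⟩)
  · simp [nil_mem_rookWalks]
  · simp [cons_zero_notMem_rookWalks]
  · simp [cons_mem_rookWalks]

theorem rookWalks_eq_biUnion {v : Fin d → ℕ} (hv : v ≠ 0) :
    RookWalks d v = ⋃ p ∈ univ.sigma fun i => range (v i),
      List.cons (p.1, p.2 + 1) '' RookWalks d (v - Pi.single p.1 (p.2 + 1)) := by
  ext (_ | ⟨⟨i, _ | k⟩, M⟩)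
  · simp [nil_mem_rookWalks, hv]
  · simp [cons_zero_notMem_rookWalks]
  · simp [cons_mem_rookWalks, and_comm]

theorem sub_single_lt {ι : Type*} [DecidableEq ι] {v : ι → ℕ} {i : ι} {k : ℕ} (hk : k < v i) :
    v - Pi.single i (k + 1) < v :=
  Pi.lt_def.2 ⟨tsub_le_self, i, by simp; omega⟩

theorem finite_rookWalks (v : Fin d → ℕ) : (RookWalks d v).Finite := by
  induction v using WellFoundedLT.induction with
  | _ v ih =>
  rcases eq_or_ne v 0 with rfl | hv
  · simp [rookWalks_zero]
  rw [rookWalks_eq_biUnion hv]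
  exact (finite_toSet _).biUnion fun p hp => (ih _ (sub_single_lt (by simpa using hp))).image _

theorem rookWalkCount_zero : rookWalkCount d 0 = 1 := by
  simp [rookWalkCount, rookWalks_zero]

theorem rookWalkCount_eq_sum {v : Fin d → ℕ} (hv : v ≠ 0) :
    rookWalkCount d v = ∑ i, ∑ k ∈ range (v i), rookWalkCount d (v - Pi.single i (k + 1)) := by
  have hdisj : (↑(univ.sigma fun i => range (v i)) : Set (Σ _ : Fin d, ℕ)).PairwiseDisjoint
      fun p => List.cons (p.1, p.2 + 1) '' RookWalks d (v - Pi.single p.1 (p.2 + 1)) := by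
    rintro ⟨i, k⟩ - ⟨j, l⟩ - hne
    refine Set.disjoint_left.2 ?_
    rintro _ ⟨M, -, rfl⟩ ⟨N, -, h⟩
    simp only [List.cons.injEq, Prod.mk.injEq, add_left_inj] at h
    exact hne (by rw [h.1.1, h.1.2])
  rw [rookWalkCount, rookWalks_eq_biUnion hv, ← set_biUnion_coe,
    (finite_toSet _).ncard_biUnion (fun p _ => (finite_rookWalks _).image _) hdisj,
    finsum_mem_coe_finset, sum_sigma]
  exact sum_congr rfl fun i _ => sum_congr rfl fun k _ =>
    Set.ncard_image_of_injective _ List.cons_injective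

end

namespace MvPowerSeries

variable {σ R : Type*} [Ring R]

/-- `xᵢ / (1 - xᵢ) · φ = (xᵢ + xᵢ² + ⋯) · φ`, defined by its coefficients so that `1 - xᵢ` need
not be inverted. -/
noncomputable def geomMul (i : σ) (φ : MvPowerSeries σ R) : MvPowerSeries σ R :=
  fun n => ∑ k ∈ range (n i), coeff (n - Finsupp.single i (k + 1)) φ

theorem coeff_geomMul (i : σ) (φ : MvPowerSeries σ R) (n : σ →₀ ℕ) :
    coeff n (geomMul i φ) = ∑ k ∈ range (n i), coeff (n - Finsupp.single i (k + 1)) φ :=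
  rfl

theorem one_sub_X_mul_geomMul (i : σ) (φ : MvPowerSeries σ R) :
    (1 - X i) * geomMul i φ = X i * φ := by
  ext n
  simp only [sub_mul, one_mul, map_sub, X, coeff_monomial_mul]
  split_ifs with h
  · obtain ⟨m, rfl⟩ := le_iff_exists_add'.1 h
    have hm : (m + Finsupp.single i 1 : σ →₀ ℕ) i = m i + 1 := by simp
    have hshift (k : ℕ) : m + Finsupp.single i 1 - Finsupp.single i (k + 1 + 1) =
        m - Finsupp.single i (k + 1) := by
      rw [Finsupp.single_add i (k + 1) 1, add_tsub_add_eq_tsub_right]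
    rw [add_tsub_cancel_right, coeff_geomMul, coeff_geomMul, hm, sum_range_succ']
    simp only [hshift, zero_add, add_tsub_cancel_right, add_sub_cancel_left]
  · have hn : n i = 0 := by simpa [Finsupp.single_le_iff] using h
    simp [coeff_geomMul, hn]

end MvPowerSeries

theorem eq_one_add_sum_geomMul_of_coeff_eq_rookWalkCount {d : ℕ} {F : MvPowerSeries (Fin d) ℤ}
    (hF : ∀ n : Fin d →₀ ℕ, coeff n F = rookWalkCount d n) :
    F = 1 + ∑ i, geomMul i F := by
  ext n
  simp only [map_add, map_sum, coeff_one, coeff_geomMul, hF, Finsupp.coe_tsub,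
    Finsupp.single_eq_pi_single]
  rcases eq_or_ne n 0 with rfl | hn
  · simp [rookWalkCount_zero]
  · rw [if_neg hn, rookWalkCount_eq_sum (by simpa using hn)]
    push_cast
    ring

theorem rook_gf_general_dim_general (d : ℕ)
    (F : MvPowerSeries (Fin d) ℤ)
    (hF : ∀ n : Fin d →₀ ℕ, MvPowerSeries.coeff n F =
      (rookWalkCount d (fun i => n i) : ℤ)) :
    (∏ i : Fin d, (1 - X i)
      - ∑ i : Fin d, X i * ∏ j ∈ Finset.univ \ {i}, (1 - X j)) * F
      = ∏ i : Fin d, (1 - X i) := by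
  set Q : MvPowerSeries (Fin d) ℤ := ∏ i, (1 - X i)
  have hQ (i : Fin d) : Q = (∏ j ∈ univ \ {i}, (1 - X j)) * (1 - X i) := by
    rw [sdiff_singleton_eq_erase, prod_erase_mul _ _ (mem_univ i)]
  calc (Q - ∑ i, X i * ∏ j ∈ univ \ {i}, (1 - X j)) * F
      = Q * F - ∑ i, (∏ j ∈ univ \ {i}, (1 - X j)) * (X i * F) := by
        rw [sub_mul, sum_mul]
        congr 1
        exact sum_congr rfl fun i _ => by ring
    _ = Q * F - ∑ i, (∏ j ∈ univ \ {i}, (1 - X j)) * ((1 - X i) * geomMul i F) := by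
        simp only [one_sub_X_mul_geomMul]
    _ = Q * (F - ∑ i, geomMul i F) := by
        simp only [← mul_assoc, ← hQ, mul_sub, mul_sum]
    _ = Q := by
        rw [sub_eq_of_eq_add (eq_one_add_sum_geomMul_of_coeff_eq_rookWalkCount hF), mul_one]

/-- For every `d ≥ 1`, the generating function
`F(x₁,…,x_d) = ∑ a_d(n₁,…,n_d) x₁^{n₁}⋯x_d^{n_d}` of `d`-dimensional rook walk
numbers satisfies
`(∏ᵢ(1-xᵢ) - ∑ᵢ xᵢ·∏_{j≠i}(1-xⱼ))·F = ∏ᵢ(1-xᵢ)`, i.e.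
`F = 1/(1 - ∑ᵢ xᵢ/(1-xᵢ))`. -/
theorem rook_gf_general_dim (d : ℕ) (hd : 1 ≤ d)
    (F : MvPowerSeries (Fin d) ℤ)
    (hF : ∀ n : Fin d →₀ ℕ, MvPowerSeries.coeff n F =
      (rookWalkCount d (fun i => n i) : ℤ)) :
    (∏ i : Fin d, (1 - X i)
      - ∑ i : Fin d, X i * ∏ j ∈ Finset.univ \ {i}, (1 - X j)) * F
      = ∏ i : Fin d, (1 - X i) :=
  rook_gf_general_dim_general d F hF
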